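/- Let 𝒮 = (([A_i,B_i],μ_i))_{i=1}^{n} be a standard homogeneous extended multi-segment all of whose reorderings satisfy the necessary condition (nec), and let 1 ≤ i < j ≤ n with S_i ∼ S_j connected in 𝒮. Then there exists a reordering 𝒮′ ∈ [𝒮] in which the entries originating from positions i and j of 𝒮 (i.e. carrying the segments [A_i,B_i] and [A_j,B_j], tracked through the transpositions performed by the reorders) occupy consecutive positions p and p+1, and their μ-parameters μ′_p and μ′_{p+1} in 𝒮′ satisfy μ′_{p+1} − μ′_p = Δ_𝒮(μ_i, μ_j). -/
import Mathlib


/-- An extended segment `([A,B], μ)` with half-integer endpoints and integer parameter `μ`. -/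
structure ExtSeg where
  A : ℚ
  B : ℚ
  mu : ℤ

namespace ExtSeg

/-- `b = A - B + 1`. -/
def segb (S : ExtSeg) : ℚ := S.A - S.B + 1

/-- `a = A + B + 1`. -/
def sega (S : ExtSeg) : ℚ := S.A + S.B + 1

/-- `μ̂ = μ` if `B ∈ ℤ`, and `μ - 1` otherwise. -/
def muHat (S : ExtSeg) : ℤ := if S.B.den = 1 then S.mu else S.mu - 1

end ExtSeg

/-- A homogeneous formal extended multi-segment of length `n`, encoded as a function
`ℕ → ExtSeg` whose relevant entries are those with index `< n`:
half-integral endpoints, `A_i - B_i ∈ ℤ_{≥0}`, `A_i + B_i ≥ 0`, a common integrality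
class for all the `A_i`, parity `μ_i ≡ b_i (mod 2)`, and admissible order. -/
def IsFormalEMS (n : ℕ) (S : ℕ → ExtSeg) : Prop :=
  (∀ i, i < n → ∃ k : ℤ, 2 * (S i).A = (k : ℚ)) ∧
  (∀ i, i < n → ∃ k : ℕ, (S i).A - (S i).B = (k : ℚ)) ∧
  (∀ i, i < n → 0 ≤ (S i).A + (S i).B) ∧
  (∀ i, i < n → ∀ j, j < n → ∃ k : ℤ, (S i).A - (S j).A = (k : ℚ)) ∧
  (∀ i, i < n → ∃ k : ℤ, ((S i).mu : ℚ) - (S i).segb = 2 * (k : ℚ)) ∧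
  (∀ i, i < n → ∀ j, j < n → (S j).A < (S i).A → (S j).B < (S i).B → j < i)

/-- A homogeneous extended multi-segment: a formal one with moreover `|μ_i| ≤ b_i`. -/
def IsEMS (n : ℕ) (S : ℕ → ExtSeg) : Prop :=
  IsFormalEMS n S ∧ ∀ i, i < n → |((S i).mu : ℚ)| ≤ (S i).segb

/-- Replace the entries at positions `i` and `i+1` by `x` and `y`. -/
def swapAt (S : ℕ → ExtSeg) (i : ℕ) (x y : ExtSeg) : ℕ → ExtSeg :=
  fun j => if j = i then x else if j = i + 1 then y else S j

/-- One reorder `R_i` (at some position `i` with `i + 1 < n`). -/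
def ReorderStep (n : ℕ) (S S' : ℕ → ExtSeg) : Prop :=
  ∃ i, i + 1 < n ∧
    (((S i).A ≤ (S (i+1)).A ∧ (S (i+1)).B ≤ (S i).B ∧
        S' = swapAt S i ⟨(S (i+1)).A, (S (i+1)).B, 2 * (S i).mu - (S (i+1)).mu⟩
                        ⟨(S i).A, (S i).B, (S i).mu⟩) ∨
     ((S (i+1)).A ≤ (S i).A ∧ (S i).B ≤ (S (i+1)).B ∧
        S' = swapAt S i ⟨(S (i+1)).A, (S (i+1)).B, (S (i+1)).mu⟩
                        ⟨(S i).A, (S i).B, 2 * (S (i+1)).mu - (S i).mu⟩) ∨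
     ((S i).A ≤ (S (i+1)).A ∧ (S i).B ≤ (S (i+1)).B ∧ S' = S))

/-- `𝒮'` is a reordering of `𝒮`: it is obtained by a finite sequence of reorders. -/
def Reorder (n : ℕ) : (ℕ → ExtSeg) → (ℕ → ExtSeg) → Prop :=
  Relation.ReflTransGen (ReorderStep n)

/-- The necessary condition (nec):
`|A_{i+1} - A_i| + |B_{i+1} - B_i| ≥ |μ_{i+1} - μ_i|` for consecutive entries. -/
def Nec (n : ℕ) (S : ℕ → ExtSeg) : Prop :=
  ∀ i, i + 1 < n →
    |((S (i+1)).mu : ℚ) - ((S i).mu : ℚ)| ≤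
      |(S (i+1)).A - (S i).A| + |(S (i+1)).B - (S i).B|

/-- Admissibility: if some `B_i < 0`, then `B_i > B_j` implies `i > j`. -/
def IsAdmissible (n : ℕ) (S : ℕ → ExtSeg) : Prop :=
  (∃ i, i < n ∧ (S i).B < 0) →
    ∀ i, i < n → ∀ j, j < n → (S j).B < (S i).B → j < i

/-- Standard: `B_i < B_j`, or `B_i = B_j` and `A_i > A_j`, implies `i < j`. -/
def IsStandard (n : ℕ) (S : ℕ → ExtSeg) : Prop :=
  ∀ i, i < n → ∀ j, j < n →
    ((S i).B < (S j).B ∨ ((S i).B = (S j).B ∧ (S j).A < (S i).A)) → i < j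

/-- Membership in `Rep`: an admissible homogeneous extended multi-segment all of whose
reorderings satisfy (nec), and with `|μ̂_i| ≤ a_i` for all `i`. -/
def InRep (n : ℕ) (S : ℕ → ExtSeg) : Prop :=
  IsEMS n S ∧ IsAdmissible n S ∧
  (∀ S', Reorder n S S' → Nec n S') ∧
  (∀ i, i < n → |((S i).muHat : ℚ)| ≤ (S i).sega)

/-- Membership in `SRep`: standard and in `Rep`. -/
def InSRep (n : ℕ) (S : ℕ → ExtSeg) : Prop :=
  IsStandard n S ∧ InRep n S

/-- `S_i ∼ S_j` (`i < j`) are connected: no `k` with `i < k < j` and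
`A_i ≥ A_k ≥ A_j` or `A_i < A_k < A_j`. -/
def Connected (n : ℕ) (S : ℕ → ExtSeg) (i j : ℕ) : Prop :=
  i < j ∧ j < n ∧
    ¬ ∃ k, i < k ∧ k < j ∧
      (((S j).A ≤ (S k).A ∧ (S k).A ≤ (S i).A) ∨
       ((S i).A < (S k).A ∧ (S k).A < (S j).A))

/-- `Δ_𝒮(μ_i, μ_j)` for `i < j`. -/
def Delta (S : ℕ → ExtSeg) (i j : ℕ) : ℤ :=
  ∑ m ∈ Finset.Ico i j,
    (-1 : ℤ) ^ ((Finset.Ioo m j).filter (fun k => (S k).A ≤ (S i).A)).card *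
      ((S (m+1)).mu - (S m).mu)

/-- An extended segment `([C,D],ν)` compatible with `𝒮`. -/
def Compatible (n : ℕ) (S : ℕ → ExtSeg) (T : ExtSeg) : Prop :=
  (∃ k : ℤ, 2 * T.A = (k : ℚ)) ∧
  (∃ k : ℕ, T.A - T.B = (k : ℚ)) ∧
  0 ≤ T.A + T.B ∧
  (∀ i, i < n → ∃ k : ℤ, T.A - (S i).A = (k : ℚ)) ∧
  (∃ k : ℤ, (T.mu : ℚ) - T.segb = 2 * (k : ℚ)) ∧
  |(T.mu : ℚ)| ≤ T.segb

/-- The (0-based) insertion position of `([C,D],ν)` into the standard `𝒮`: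
the number of indices `k` with `B_k < D`, or `B_k = D` and `A_k ≥ C`. -/
def insertPos (n : ℕ) (S : ℕ → ExtSeg) (T : ExtSeg) : ℕ :=
  ((Finset.range n).filter
    (fun k => (S k).B < T.B ∨ ((S k).B = T.B ∧ T.A ≤ (S k).A))).card

/-- The insertion `𝒮_{([C,D],ν)}`: insert `T` twice at the consecutive positions
`insertPos n S T` and `insertPos n S T + 1`; the result has length `n + 2`. -/
def insertTwice (n : ℕ) (S : ℕ → ExtSeg) (T : ExtSeg) : ℕ → ExtSeg :=
  fun j =>
    if j < insertPos n S T then S j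
    else if j = insertPos n S T ∨ j = insertPos n S T + 1 then T
    else S (j - 2)

/-- The swap of positions `i` and `i+1`, applied to a position-tracking map. -/
def swapPos (i : ℕ) (f : ℕ → ℕ) : ℕ → ℕ :=
  fun j => if f j = i then i + 1 else if f j = i + 1 then i else f j

/-- One reorder together with the tracking of positions: the second component maps
original positions to current positions. -/
def TReorderStep (n : ℕ) :
    (ℕ → ExtSeg) × (ℕ → ℕ) → (ℕ → ExtSeg) × (ℕ → ℕ) → Prop :=
  fun P P' =>
    ∃ i, i + 1 < n ∧
      (((P.1 i).A ≤ (P.1 (i+1)).A ∧ (P.1 (i+1)).B ≤ (P.1 i).B ∧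
          P'.1 = swapAt P.1 i
            ⟨(P.1 (i+1)).A, (P.1 (i+1)).B, 2 * (P.1 i).mu - (P.1 (i+1)).mu⟩
            ⟨(P.1 i).A, (P.1 i).B, (P.1 i).mu⟩ ∧
          P'.2 = swapPos i P.2) ∨
       ((P.1 (i+1)).A ≤ (P.1 i).A ∧ (P.1 i).B ≤ (P.1 (i+1)).B ∧
          P'.1 = swapAt P.1 i
            ⟨(P.1 (i+1)).A, (P.1 (i+1)).B, (P.1 (i+1)).mu⟩
            ⟨(P.1 i).A, (P.1 i).B, 2 * (P.1 (i+1)).mu - (P.1 i).mu⟩ ∧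
          P'.2 = swapPos i P.2) ∨
       ((P.1 i).A ≤ (P.1 (i+1)).A ∧ (P.1 i).B ≤ (P.1 (i+1)).B ∧
          P'.1 = P.1 ∧ P'.2 = P.2))

/-- Tracked reordering: a finite sequence of tracked reorders. -/
def TReorder (n : ℕ) :
    (ℕ → ExtSeg) × (ℕ → ℕ) → (ℕ → ExtSeg) × (ℕ → ℕ) → Prop :=
  Relation.ReflTransGen (TReorderStep n)

namespace Stmt15Aux

open Finset

/-- The Δ-like invariant sum on the window `[p,q]`. -/
def Efun (S : ℕ → ExtSeg) (p q : ℕ) : ℤ :=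
  ∑ m ∈ Finset.Ico p q,
    (-1 : ℤ) ^ ((Finset.Ioo m q).filter (fun k => (S k).A ≤ (S p).A)).card *
      ((S (m+1)).mu - (S m).mu)

/-- The termination measure. -/
def meas (S : ℕ → ExtSeg) (p q : ℕ) : ℕ :=
  ∑ m ∈ Finset.Ioo p q, (if (S m).A ≤ (S p).A then m - p else q - m)

lemma swapAt_left (S : ℕ → ExtSeg) (w : ℕ) (x y : ExtSeg) : swapAt S w x y w = x := by
  simp [swapAt]

lemma swapAt_right (S : ℕ → ExtSeg) (w : ℕ) (x y : ExtSeg) : swapAt S w x y (w+1) = y := by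
  simp [swapAt]

lemma swapAt_other (S : ℕ → ExtSeg) (w : ℕ) (x y : ExtSeg) {m : ℕ}
    (h1 : m ≠ w) (h2 : m ≠ w + 1) : swapAt S w x y m = S m := by
  simp [swapAt, h1, h2]

lemma telescope (g : ℕ → ℤ) {a b : ℕ} (h : a ≤ b) :
    ∑ m ∈ Finset.Ico a b, (g (m+1) - g m) = g b - g a := by
  induction b, h using Nat.le_induction with
  | base => simp
  | succ b hb ih => rw [Finset.sum_Ico_succ_top hb, ih]; ring

lemma Ioo_eq_insert {a b : ℕ} (h : a + 1 < b) :
    Finset.Ioo a b = insert (a+1) (Finset.Ioo (a+1) b) := by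
  ext k; simp only [Finset.mem_Ioo, Finset.mem_insert]; omega

lemma Ioo_eq_insert_top {a b : ℕ} (h : a < b) :
    Finset.Ioo a (b+1) = insert b (Finset.Ioo a b) := by
  ext k; simp only [Finset.mem_Ioo, Finset.mem_insert]; omega

lemma card_filter_swap {s : Finset ℕ} {P Q : ℕ → Prop} [DecidablePred P] [DecidablePred Q]
    {u v : ℕ} (hu : u ∈ s) (hv : v ∈ s) (huv : u ≠ v)
    (h : ∀ k ∈ s, k ≠ u → k ≠ v → (P k ↔ Q k))
    (hPu : P u) (hPv : ¬ P v) (hQu : ¬ Q u) (hQv : Q v) :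
    (s.filter P).card = (s.filter Q).card := by
  have key : s.filter P = insert u ((s.filter Q).erase v) := by
    ext k
    simp only [Finset.mem_filter, Finset.mem_insert, Finset.mem_erase]
    by_cases hk1 : k = u
    · subst hk1; simp [hu, hPu]
    · by_cases hk2 : k = v
      · subst hk2
        simp [hPv, fun hh : k = u => hk1 hh, hQv]
      · constructor
        · rintro ⟨hks, hPk⟩; exact Or.inr ⟨hk2, hks, (h k hks hk1 hk2).1 hPk⟩
        · rintro (hh | ⟨_, hks, hQk⟩)
          · exact absurd hh hk1
          · exact ⟨hks, (h k hks hk1 hk2).2 hQk⟩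
  have hvQ : v ∈ s.filter Q := Finset.mem_filter.2 ⟨hv, hQv⟩
  have hun : u ∉ (s.filter Q).erase v := by
    intro hcon
    exact hQu (Finset.mem_filter.1 (Finset.mem_of_mem_erase hcon)).2
  rw [key, Finset.card_insert_of_notMem hun, Finset.card_erase_of_mem hvQ]
  have : 1 ≤ (s.filter Q).card := Finset.card_pos.2 ⟨v, hvQ⟩
  omega

lemma Efun_base (S : ℕ → ExtSeg) (p : ℕ) :
    Efun S p (p+1) = (S (p+1)).mu - (S p).mu := by
  rw [Efun]
  rw [show Finset.Ico p (p+1) = {p} by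
    ext k; simp only [Finset.mem_Ico, Finset.mem_singleton]; omega]
  rw [Finset.sum_singleton]
  rw [show Finset.Ioo p (p+1) = (∅ : Finset ℕ) by
    ext k; simp only [Finset.mem_Ioo, Finset.notMem_empty, iff_false]; omega]
  simp

lemma Efun_eject_left {S : ℕ → ExtSeg} {p q : ℕ} (hpq : p + 1 < q)
    (hbel : (S (p+1)).A ≤ (S p).A) :
    Efun (swapAt S p (S (p+1)) ⟨(S p).A, (S p).B, 2 * (S (p+1)).mu - (S p).mu⟩) (p+1) q
      = Efun S p q := by
  set T := swapAt S p (S (p+1)) ⟨(S p).A, (S p).B, 2 * (S (p+1)).mu - (S p).mu⟩ with hT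
  have hTm : ∀ m, p + 1 < m → T m = S m := fun m hm =>
    swapAt_other _ _ _ _ (by omega) (by omega)
  have hTp1 : T (p+1) = ⟨(S p).A, (S p).B, 2 * (S (p+1)).mu - (S p).mu⟩ :=
    swapAt_right _ _ _ _
  have hfil : ∀ m, p + 1 ≤ m →
      (Finset.Ioo m q).filter (fun k => (T k).A ≤ (T (p+1)).A)
        = (Finset.Ioo m q).filter (fun k => (S k).A ≤ (S p).A) := by
    intro m hm
    apply Finset.filter_congr
    intro k hk
    simp only [Finset.mem_Ioo] at hk
    rw [hTm k (by omega), hTp1]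
  have hc1 : ((Finset.Ioo p q).filter (fun k => (S k).A ≤ (S p).A)).card
      = ((Finset.Ioo (p+1) q).filter (fun k => (S k).A ≤ (S p).A)).card + 1 := by
    rw [Ioo_eq_insert hpq, Finset.filter_insert, if_pos hbel,
      Finset.card_insert_of_notMem (by simp)]
  unfold Efun
  rw [Finset.sum_eq_sum_Ico_succ_bot (show p < q by omega)]
  rw [Finset.sum_eq_sum_Ico_succ_bot hpq]
  rw [Finset.sum_eq_sum_Ico_succ_bot hpq]
  have hrest : ∑ m ∈ Finset.Ico (p+1+1) q,
      (-1:ℤ)^((Finset.Ioo m q).filter (fun k => (T k).A ≤ (T (p+1)).A)).card *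
        ((T (m+1)).mu - (T m).mu)
      = ∑ m ∈ Finset.Ico (p+1+1) q,
      (-1:ℤ)^((Finset.Ioo m q).filter (fun k => (S k).A ≤ (S p).A)).card *
        ((S (m+1)).mu - (S m).mu) := by
    apply Finset.sum_congr rfl
    intro m hm
    simp only [Finset.mem_Ico] at hm
    rw [hfil m (by omega), hTm m (by omega), hTm (m+1) (by omega)]
  rw [hrest]
  have key : (-1:ℤ)^((Finset.Ioo (p+1) q).filter (fun k => (T k).A ≤ (T (p+1)).A)).card *
        ((T (p+1+1)).mu - (T (p+1)).mu)
      = (-1:ℤ)^((Finset.Ioo p q).filter (fun k => (S k).A ≤ (S p).A)).card *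
          ((S (p+1)).mu - (S p).mu)
        + (-1:ℤ)^((Finset.Ioo (p+1) q).filter (fun k => (S k).A ≤ (S p).A)).card *
          ((S (p+1+1)).mu - (S (p+1)).mu) := by
    rw [hfil (p+1) le_rfl, hTm (p+1+1) (by omega), hTp1, hc1, pow_succ]
    ring
  rw [key]; ring

lemma Efun_eject_right {S : ℕ → ExtSeg} {p w : ℕ} (hpw : p < w)
    (hnob : ∀ m, p < m → m < w + 1 → ¬ (S m).A ≤ (S p).A) :
    Efun (swapAt S w (S (w+1)) ⟨(S w).A, (S w).B, 2 * (S (w+1)).mu - (S w).mu⟩) p w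
      = Efun S p (w+1) := by
  set T := swapAt S w (S (w+1)) ⟨(S w).A, (S w).B, 2 * (S (w+1)).mu - (S w).mu⟩ with hT
  have hTm : ∀ m, m < w → T m = S m := fun m hm =>
    swapAt_other _ _ _ _ (by omega) (by omega)
  have hTp : T p = S p := hTm p hpw
  have hTw : T w = S (w+1) := swapAt_left _ _ _ _
  have hL : Efun T p w = (T w).mu - (T p).mu := by
    rw [← telescope (fun m => (T m).mu) (le_of_lt hpw)]
    apply Finset.sum_congr rfl
    intro m hm
    simp only [Finset.mem_Ico] at hm
    have hfil : (Finset.Ioo m w).filter (fun k => (T k).A ≤ (T p).A) = ∅ := by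
      rw [Finset.filter_eq_empty_iff]
      intro k hk
      simp only [Finset.mem_Ioo] at hk
      rw [hTm k hk.2, hTp]
      exact hnob k (by omega) (by omega)
    rw [hfil]
    simp
  have hR : Efun S p (w+1) = (S (w+1)).mu - (S p).mu := by
    rw [← telescope (fun m => (S m).mu) (show p ≤ w+1 by omega)]
    apply Finset.sum_congr rfl
    intro m hm
    simp only [Finset.mem_Ico] at hm
    have hfil : (Finset.Ioo m (w+1)).filter (fun k => (S k).A ≤ (S p).A) = ∅ := by
      rw [Finset.filter_eq_empty_iff]
      intro k hk
      simp only [Finset.mem_Ioo] at hk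
      exact hnob k (by omega) (by omega)
    rw [hfil]
    simp
  rw [hL, hR, hTw, hTp]

lemma Efun_cross {S : ℕ → ExtSeg} {p q s : ℕ} (hps : p ≤ s) (hq : s + 2 < q)
    (hab : ¬ (S (s+1)).A ≤ (S p).A) (hbel : (S (s+2)).A ≤ (S p).A) :
    Efun (swapAt S (s+1) (S (s+2))
        ⟨(S (s+1)).A, (S (s+1)).B, 2 * (S (s+2)).mu - (S (s+1)).mu⟩) p q
      = Efun S p q := by
  set T := swapAt S (s+1) (S (s+2))
      ⟨(S (s+1)).A, (S (s+1)).B, 2 * (S (s+2)).mu - (S (s+1)).mu⟩ with hT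
  have hTm : ∀ m, m ≠ s+1 → m ≠ s+2 → T m = S m := fun m h1 h2 =>
    swapAt_other _ _ _ _ h1 (by omega)
  have hT1 : T (s+1) = S (s+2) := swapAt_left _ _ _ _
  have hT2 : T (s+2) = ⟨(S (s+1)).A, (S (s+1)).B, 2 * (S (s+2)).mu - (S (s+1)).mu⟩ :=
    swapAt_right _ _ _ _
  have hTp : T p = S p := hTm p (by omega) (by omega)
  have hswapcard : ∀ m, m ≤ s →
      ((Finset.Ioo m q).filter (fun k => (T k).A ≤ (T p).A)).card
      = ((Finset.Ioo m q).filter (fun k => (S k).A ≤ (S p).A)).card := by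
    intro m hm
    apply card_filter_swap (u := s+1) (v := s+2)
    · simp only [Finset.mem_Ioo]; omega
    · simp only [Finset.mem_Ioo]; omega
    · omega
    · intro k _ hk1 hk2; rw [hTm k hk1 hk2, hTp]
    · show (T (s+1)).A ≤ (T p).A
      rw [hT1, hTp]; exact hbel
    · show ¬ (T (s+2)).A ≤ (T p).A
      rw [hT2, hTp]; exact hab
    · exact hab
    · exact hbel
  set c := ((Finset.Ioo (s+2) q).filter (fun k => (S k).A ≤ (S p).A)).card with hc
  have hcS1 : ((Finset.Ioo (s+1) q).filter (fun k => (S k).A ≤ (S p).A)).card = c + 1 := by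
    rw [Ioo_eq_insert (show s+1+1 < q by omega), Finset.filter_insert]
    rw [show s+1+1 = s+2 from rfl, if_pos hbel, Finset.card_insert_of_notMem (by simp)]
  have hcS0 : ((Finset.Ioo s q).filter (fun k => (S k).A ≤ (S p).A)).card = c + 1 := by
    rw [Ioo_eq_insert (show s+1 < q by omega), Finset.filter_insert, if_neg hab]
    exact hcS1
  have hcT2 : ((Finset.Ioo (s+2) q).filter (fun k => (T k).A ≤ (T p).A)).card = c := by
    rw [hc]
    congr 1
    apply Finset.filter_congr
    intro k hk
    simp only [Finset.mem_Ioo] at hk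
    rw [hTm k (by omega) (by omega), hTp]
  have hcT1 : ((Finset.Ioo (s+1) q).filter (fun k => (T k).A ≤ (T p).A)).card = c := by
    rw [Ioo_eq_insert (show s+1+1 < q by omega), Finset.filter_insert]
    rw [show s+1+1 = s+2 from rfl, if_neg (by rw [hT2, hTp]; exact hab)]
    exact hcT2
  have split : ∀ f : ℕ → ℤ, ∑ m ∈ Finset.Ico p q, f m
      = ∑ m ∈ Finset.Ico p s, f m + f s + f (s+1) + f (s+2)
        + ∑ m ∈ Finset.Ico (s+3) q, f m := by
    intro f
    have h1 : ∑ m ∈ Finset.Ico p (s+3), f m + ∑ m ∈ Finset.Ico (s+3) q, f m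
        = ∑ m ∈ Finset.Ico p q, f m :=
      Finset.sum_Ico_consecutive f (by omega) (by omega)
    have h2 : ∑ m ∈ Finset.Ico p (s+3), f m = ∑ m ∈ Finset.Ico p (s+2), f m + f (s+2) :=
      Finset.sum_Ico_succ_top (by omega) f
    have h3 : ∑ m ∈ Finset.Ico p (s+2), f m = ∑ m ∈ Finset.Ico p (s+1), f m + f (s+1) :=
      Finset.sum_Ico_succ_top (by omega) f
    have h4 : ∑ m ∈ Finset.Ico p (s+1), f m = ∑ m ∈ Finset.Ico p s, f m + f s :=
      Finset.sum_Ico_succ_top (by omega) f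
    rw [← h1, h2, h3, h4]
  show Efun T p q = Efun S p q
  unfold Efun
  rw [split, split]
  have hchunkL : ∑ m ∈ Finset.Ico p s,
      (-1:ℤ)^((Finset.Ioo m q).filter (fun k => (T k).A ≤ (T p).A)).card *
        ((T (m+1)).mu - (T m).mu)
      = ∑ m ∈ Finset.Ico p s,
      (-1:ℤ)^((Finset.Ioo m q).filter (fun k => (S k).A ≤ (S p).A)).card *
        ((S (m+1)).mu - (S m).mu) := by
    apply Finset.sum_congr rfl
    intro m hm
    simp only [Finset.mem_Ico] at hm
    rw [hswapcard m (by omega), hTm m (by omega) (by omega), hTm (m+1) (by omega) (by omega)]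
  have hchunkR : ∑ m ∈ Finset.Ico (s+3) q,
      (-1:ℤ)^((Finset.Ioo m q).filter (fun k => (T k).A ≤ (T p).A)).card *
        ((T (m+1)).mu - (T m).mu)
      = ∑ m ∈ Finset.Ico (s+3) q,
      (-1:ℤ)^((Finset.Ioo m q).filter (fun k => (S k).A ≤ (S p).A)).card *
        ((S (m+1)).mu - (S m).mu) := by
    apply Finset.sum_congr rfl
    intro m hm
    simp only [Finset.mem_Ico] at hm
    have hfil : (Finset.Ioo m q).filter (fun k => (T k).A ≤ (T p).A)
        = (Finset.Ioo m q).filter (fun k => (S k).A ≤ (S p).A) := by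
      apply Finset.filter_congr
      intro k hk
      simp only [Finset.mem_Ioo] at hk
      rw [hTm k (by omega) (by omega), hTp]
    rw [hfil, hTm m (by omega) (by omega), hTm (m+1) (by omega) (by omega)]
  rw [hchunkL, hchunkR]
  have e1 : s + 1 + 1 = s + 2 := rfl
  have e2 : s + 2 + 1 = s + 3 := rfl
  rw [hswapcard s le_rfl, hcS0, hcT1, hcT2, e1, e2, ← hc]
  simp only [hT1, hT2, hTm s (by omega) (by omega), hTm (s+3) (by omega) (by omega)]
  rw [pow_succ, hcS1, pow_succ]
  ring

lemma meas_eject_left {S : ℕ → ExtSeg} {p q : ℕ} (hpq : p + 1 < q)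
    (hbel : (S (p+1)).A ≤ (S p).A) :
    meas (swapAt S p (S (p+1)) ⟨(S p).A, (S p).B, 2 * (S (p+1)).mu - (S p).mu⟩) (p+1) q + 1
      ≤ meas S p q := by
  set T := swapAt S p (S (p+1)) ⟨(S p).A, (S p).B, 2 * (S (p+1)).mu - (S p).mu⟩ with hT
  have hTm : ∀ m, p + 1 < m → T m = S m := fun m hm =>
    swapAt_other _ _ _ _ (by omega) (by omega)
  have hTp1 : T (p+1) = ⟨(S p).A, (S p).B, 2 * (S (p+1)).mu - (S p).mu⟩ :=
    swapAt_right _ _ _ _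
  have hA1 : (T (p+1)).A = (S p).A := by rw [hTp1]
  have hdec : meas S p q = (if (S (p+1)).A ≤ (S p).A then (p+1) - p else q - (p+1))
      + ∑ m ∈ Finset.Ioo (p+1) q, (if (S m).A ≤ (S p).A then m - p else q - m) := by
    rw [meas, Ioo_eq_insert hpq, Finset.sum_insert (by simp)]
  have hle : meas T (p+1) q
      ≤ ∑ m ∈ Finset.Ioo (p+1) q, (if (S m).A ≤ (S p).A then m - p else q - m) := by
    rw [meas]
    apply Finset.sum_le_sum
    intro m hm
    simp only [Finset.mem_Ioo] at hm
    rw [hTm m (by omega), hA1]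
    split <;> omega
  rw [hdec, if_pos hbel]
  omega

lemma meas_eject_right {S : ℕ → ExtSeg} {p w : ℕ} (hpw : p < w)
    (hnob : ∀ m, p < m → m < w + 1 → ¬ (S m).A ≤ (S p).A) :
    meas (swapAt S w (S (w+1)) ⟨(S w).A, (S w).B, 2 * (S (w+1)).mu - (S w).mu⟩) p w + 1
      ≤ meas S p (w+1) := by
  set T := swapAt S w (S (w+1)) ⟨(S w).A, (S w).B, 2 * (S (w+1)).mu - (S w).mu⟩ with hT
  have hTm : ∀ m, m < w → T m = S m := fun m hm =>
    swapAt_other _ _ _ _ (by omega) (by omega)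
  have hTp : T p = S p := hTm p hpw
  have hdec : meas S p (w+1) = (if (S w).A ≤ (S p).A then w - p else (w+1) - w)
      + ∑ m ∈ Finset.Ioo p w, (if (S m).A ≤ (S p).A then m - p else (w+1) - m) := by
    rw [meas, Ioo_eq_insert_top hpw, Finset.sum_insert (by simp)]
  have hle : meas T p w
      ≤ ∑ m ∈ Finset.Ioo p w, (if (S m).A ≤ (S p).A then m - p else (w+1) - m) := by
    rw [meas]
    apply Finset.sum_le_sum
    intro m hm
    simp only [Finset.mem_Ioo] at hm
    rw [hTm m (by omega), hTp]
    split <;> omega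
  rw [hdec, if_neg (hnob w (by omega) (by omega))]
  omega

lemma meas_cross {S : ℕ → ExtSeg} {p q s : ℕ} (hps : p ≤ s) (hq : s + 2 < q)
    (hab : ¬ (S (s+1)).A ≤ (S p).A) (hbel : (S (s+2)).A ≤ (S p).A) :
    meas (swapAt S (s+1) (S (s+2))
        ⟨(S (s+1)).A, (S (s+1)).B, 2 * (S (s+2)).mu - (S (s+1)).mu⟩) p q + 1
      ≤ meas S p q := by
  set T := swapAt S (s+1) (S (s+2))
      ⟨(S (s+1)).A, (S (s+1)).B, 2 * (S (s+2)).mu - (S (s+1)).mu⟩ with hT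
  have hTm : ∀ m, m ≠ s+1 → m ≠ s+2 → T m = S m := fun m h1 h2 =>
    swapAt_other _ _ _ _ h1 (by omega)
  have hT1 : T (s+1) = S (s+2) := swapAt_left _ _ _ _
  have hT2 : T (s+2) = ⟨(S (s+1)).A, (S (s+1)).B, 2 * (S (s+2)).mu - (S (s+1)).mu⟩ :=
    swapAt_right _ _ _ _
  have hT2A : (T (s+2)).A = (S (s+1)).A := by rw [hT2]
  have hTp : T p = S p := hTm p (by omega) (by omega)
  have hset : Finset.Ioo p q
      = insert (s+1) (insert (s+2) ((Finset.Ioo p q) \ {s+1, s+2})) := by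
    ext k
    simp only [Finset.mem_Ioo, Finset.mem_insert, Finset.mem_sdiff, Finset.mem_singleton]
    omega
  have hni1 : (s+1) ∉ insert (s+2) ((Finset.Ioo p q) \ {s+1, s+2}) := by
    simp
  have hni2 : (s+2) ∉ (Finset.Ioo p q) \ {s+1, s+2} := by
    simp
  have hrest : ∑ m ∈ (Finset.Ioo p q) \ {s+1, s+2},
        (if (T m).A ≤ (T p).A then m - p else q - m)
      = ∑ m ∈ (Finset.Ioo p q) \ {s+1, s+2},
        (if (S m).A ≤ (S p).A then m - p else q - m) := by
    apply Finset.sum_congr rfl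
    intro m hm
    simp only [Finset.mem_sdiff, Finset.mem_insert, Finset.mem_singleton] at hm
    rw [hTm m (by omega) (by omega), hTp]
  have hdecT : meas T p q = (if (T (s+1)).A ≤ (T p).A then (s+1) - p else q - (s+1))
      + ((if (T (s+2)).A ≤ (T p).A then (s+2) - p else q - (s+2))
      + ∑ m ∈ (Finset.Ioo p q) \ {s+1, s+2},
          (if (T m).A ≤ (T p).A then m - p else q - m)) := by
    conv_lhs => rw [meas, hset]
    rw [Finset.sum_insert hni1, Finset.sum_insert hni2]
  have hdecS : meas S p q = (if (S (s+1)).A ≤ (S p).A then (s+1) - p else q - (s+1))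
      + ((if (S (s+2)).A ≤ (S p).A then (s+2) - p else q - (s+2))
      + ∑ m ∈ (Finset.Ioo p q) \ {s+1, s+2},
          (if (S m).A ≤ (S p).A then m - p else q - m)) := by
    conv_lhs => rw [meas, hset]
    rw [Finset.sum_insert hni1, Finset.sum_insert hni2]
  rw [hdecT, hdecS, hrest, hT1, hT2A, hTp]
  rw [if_pos hbel, if_pos hbel, if_neg hab, if_neg hab]
  omega

end Stmt15Aux

namespace Stmt15Aux

open Finset

lemma swapPos_of_eq {w : ℕ} {f : ℕ → ℕ} {x : ℕ} (hx : f x = w) :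
    swapPos w f x = w + 1 := by
  unfold swapPos
  rw [hx, if_pos rfl]

lemma swapPos_of_eq_succ {w : ℕ} {f : ℕ → ℕ} {x : ℕ} (hx : f x = w + 1) :
    swapPos w f x = w := by
  unfold swapPos
  rw [hx, if_neg (by omega), if_pos rfl]

lemma swapPos_of_ne {w : ℕ} {f : ℕ → ℕ} {x y : ℕ} (hx : f x = y)
    (h1 : y ≠ w) (h2 : y ≠ w + 1) : swapPos w f x = y := by
  unfold swapPos
  rw [hx, if_neg h1, if_neg h2]

lemma aux (n : ℕ) (M : ℕ) : ∀ (S : ℕ → ExtSeg) (f : ℕ → ℕ) (p q : ℕ),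
    p < q → q < n →
    (∀ m, p < m → m < q →
      ((S m).A ≤ (S p).A → (S p).B ≤ (S m).B) ∧
      (¬ (S m).A ≤ (S p).A → (S q).A ≤ (S m).A ∧ (S m).B ≤ (S q).B)) →
    (∀ m m', p < m → m < m' → m' < q → ¬ (S m).A ≤ (S p).A → (S m').A ≤ (S p).A →
      (S m).B ≤ (S m').B) →
    meas S p q ≤ M →
    ∃ (S' : ℕ → ExtSeg) (g : ℕ → ℕ) (p' : ℕ),
      TReorder n (S, f) (S', g) ∧
      (∀ x, f x = p → g x = p') ∧ (∀ x, f x = q → g x = p' + 1) ∧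
      (S' (p' + 1)).mu - (S' p').mu = Efun S p q := by
  induction M with
  | zero =>
    intro S f p q hpq hqn hH1 hH2 hm
    have hq1 : q = p + 1 := by
      by_contra hne
      have hp1 : p + 1 ∈ Finset.Ioo p q := by
        simp only [Finset.mem_Ioo]; omega
      have h1 : 1 ≤ (if (S (p+1)).A ≤ (S p).A then (p+1) - p else q - (p+1)) := by
        split <;> omega
      have h2 : (if (S (p+1)).A ≤ (S p).A then (p+1) - p else q - (p+1)) ≤ meas S p q := by
        rw [meas]
        exact Finset.single_le_sum
          (f := fun m => if (S m).A ≤ (S p).A then m - p else q - m)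
          (fun i _ => Nat.zero_le _) hp1
      omega
    subst hq1
    exact ⟨S, f, p, Relation.ReflTransGen.refl, fun x hx => hx, fun x hx => hx,
      (Efun_base S p).symm⟩
  | succ M ih =>
    intro S f p q hpq hqn hH1 hH2 hm
    by_cases hq1 : q = p + 1
    · subst hq1
      exact ⟨S, f, p, Relation.ReflTransGen.refl, fun x hx => hx, fun x hx => hx,
        (Efun_base S p).symm⟩
    have hpq2 : p + 1 < q := by omega
    by_cases hbel : (S (p+1)).A ≤ (S p).A
    · -- eject the entry at p+1 to the left past the p-entry
      have hB : (S p).B ≤ (S (p+1)).B := (hH1 (p+1) (by omega) hpq2).1 hbel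
      set T := swapAt S p (S (p+1)) ⟨(S p).A, (S p).B, 2 * (S (p+1)).mu - (S p).mu⟩ with hT
      have hTm : ∀ m, p + 1 < m → T m = S m := fun m hm =>
        swapAt_other _ _ _ _ (by omega) (by omega)
      have hTp1 : T (p+1) = ⟨(S p).A, (S p).B, 2 * (S (p+1)).mu - (S p).mu⟩ :=
        swapAt_right _ _ _ _
      have hA1 : (T (p+1)).A = (S p).A := by rw [hTp1]
      have hB1 : (T (p+1)).B = (S p).B := by rw [hTp1]
      have hTq : T q = S q := hTm q (by omega)
      have hstep : TReorderStep n (S, f) (T, swapPos p f) := by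
        refine ⟨p, by omega, Or.inr (Or.inl ⟨hbel, hB, ?_, rfl⟩)⟩
        show T = swapAt S p ⟨(S (p+1)).A, (S (p+1)).B, (S (p+1)).mu⟩
          ⟨(S p).A, (S p).B, 2 * (S (p+1)).mu - (S p).mu⟩
        rfl
      have hH1' : ∀ m, p + 1 < m → m < q →
          ((T m).A ≤ (T (p+1)).A → (T (p+1)).B ≤ (T m).B) ∧
          (¬ (T m).A ≤ (T (p+1)).A → (T q).A ≤ (T m).A ∧ (T m).B ≤ (T q).B) := by
        intro m h1 h2
        rw [hTm m h1, hA1, hB1, hTq]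
        exact hH1 m (by omega) h2
      have hH2' : ∀ m m', p + 1 < m → m < m' → m' < q →
          ¬ (T m).A ≤ (T (p+1)).A → (T m').A ≤ (T (p+1)).A → (T m).B ≤ (T m').B := by
        intro m m' h1 h2 h3
        rw [hTm m h1, hTm m' (by omega), hA1]
        exact hH2 m m' (by omega) h2 h3
      have hmeas : meas T (p+1) q ≤ M := by
        have h := meas_eject_left hpq2 hbel
        rw [← hT] at h
        omega
      obtain ⟨S', g, p', hchain, hgp, hgq, hE⟩ :=
        ih T (swapPos p f) (p+1) q (by omega) hqn hH1' hH2' hmeas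
      refine ⟨S', g, p', Relation.ReflTransGen.head hstep hchain, ?_, ?_, ?_⟩
      · intro x hx
        exact hgp x (swapPos_of_eq hx)
      · intro x hx
        exact hgq x (swapPos_of_ne hx (by omega) (by omega))
      · rw [hE]
        exact Efun_eject_left hpq2 hbel
    · by_cases hex : ∃ m, p < m ∧ m < q ∧ (S m).A ≤ (S p).A
      · -- cross the leftmost "below" entry over the "above" entry to its left
        have hr := Nat.find_spec hex
        have hrmin : ∀ m, m < Nat.find hex → ¬(p < m ∧ m < q ∧ (S m).A ≤ (S p).A) :=
          fun m hm => Nat.find_min hex hm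
        have hr2 : p + 2 ≤ Nat.find hex := by
          rcases hr with ⟨h1, h2, h3⟩
          by_contra h
          have hrp : Nat.find hex = p + 1 := by omega
          rw [hrp] at h3
          exact hbel h3
        obtain ⟨s, hs⟩ : ∃ s, Nat.find hex = s + 2 := ⟨Nat.find hex - 2, by omega⟩
        have hps : p ≤ s := by omega
        have hsq : s + 2 < q := by rw [← hs]; exact hr.2.1
        have hbel2 : (S (s+2)).A ≤ (S p).A := by rw [← hs]; exact hr.2.2
        have hab : ¬ (S (s+1)).A ≤ (S p).A := by
          intro hcon
          exact (hrmin (s+1) (by omega)) ⟨by omega, by omega, hcon⟩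
        have hBc : (S (s+1)).B ≤ (S (s+2)).B :=
          hH2 (s+1) (s+2) (by omega) (by omega) (by omega) hab hbel2
        have hAc : (S (s+2)).A ≤ (S (s+1)).A :=
          le_trans hbel2 (le_of_lt (lt_of_not_ge hab))
        set T := swapAt S (s+1) (S (s+2))
            ⟨(S (s+1)).A, (S (s+1)).B, 2 * (S (s+2)).mu - (S (s+1)).mu⟩ with hT
        have hTm : ∀ m, m ≠ s+1 → m ≠ s+2 → T m = S m := fun m h1 h2 =>
          swapAt_other _ _ _ _ h1 (by omega)
        have hT1 : T (s+1) = S (s+2) := swapAt_left _ _ _ _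
        have hT2 : T (s+2) = ⟨(S (s+1)).A, (S (s+1)).B, 2 * (S (s+2)).mu - (S (s+1)).mu⟩ :=
          swapAt_right _ _ _ _
        have hT2A : (T (s+2)).A = (S (s+1)).A := by rw [hT2]
        have hT2B : (T (s+2)).B = (S (s+1)).B := by rw [hT2]
        have hTp : T p = S p := hTm p (by omega) (by omega)
        have hTq : T q = S q := hTm q (by omega) (by omega)
        have hstep : TReorderStep n (S, f) (T, swapPos (s+1) f) := by
          refine ⟨s+1, by omega, Or.inr (Or.inl ⟨hAc, hBc, ?_, rfl⟩)⟩
          show T = swapAt S (s+1) ⟨(S (s+1+1)).A, (S (s+1+1)).B, (S (s+1+1)).mu⟩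
            ⟨(S (s+1)).A, (S (s+1)).B, 2 * (S (s+1+1)).mu - (S (s+1)).mu⟩
          rfl
        have hH1' : ∀ m, p < m → m < q →
            ((T m).A ≤ (T p).A → (T p).B ≤ (T m).B) ∧
            (¬ (T m).A ≤ (T p).A → (T q).A ≤ (T m).A ∧ (T m).B ≤ (T q).B) := by
          intro m h1 h2
          by_cases hm1 : m = s+1
          · subst hm1
            rw [hT1, hTp, hTq]
            constructor
            · intro _
              exact (hH1 (s+2) (by omega) (by omega)).1 hbel2
            · intro hcon
              exact absurd hbel2 hcon
          · by_cases hm2 : m = s+2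
            · subst hm2
              rw [hT2A, hT2B, hTp, hTq]
              constructor
              · intro hb
                exact absurd hb hab
              · intro _
                exact (hH1 (s+1) (by omega) (by omega)).2 hab
            · rw [hTm m hm1 hm2, hTp, hTq]
              exact hH1 m h1 h2
        have hH2' : ∀ m m', p < m → m < m' → m' < q →
            ¬ (T m).A ≤ (T p).A → (T m').A ≤ (T p).A → (T m).B ≤ (T m').B := by
          intro m m' h1 h2 h3 hnb hb
          rw [hTp] at hnb hb
          by_cases hm1 : m = s+1
          · subst hm1
            rw [hT1] at hnb
            exact absurd hbel2 hnb
          · by_cases hm'2 : m' = s+2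
            · subst hm'2
              rw [hT2A] at hb
              exact absurd hb hab
            · by_cases hm2 : m = s+2
              · subst hm2
                rw [hTm m' (by omega) hm'2] at hb
                rw [hT2B, hTm m' (by omega) hm'2]
                exact hH2 (s+1) m' (by omega) (by omega) h3 hab hb
              · by_cases hm'1 : m' = s+1
                · subst hm'1
                  rw [hTm m hm1 hm2] at hnb
                  rw [hTm m hm1 hm2, hT1]
                  exact hH2 m (s+2) h1 (by omega) (by omega) hnb hbel2
                · rw [hTm m hm1 hm2] at hnb
                  rw [hTm m' hm'1 hm'2] at hb
                  rw [hTm m hm1 hm2, hTm m' hm'1 hm'2]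
                  exact hH2 m m' h1 h2 h3 hnb hb
        have hmeas : meas T p q ≤ M := by
          have h := meas_cross hps hsq hab hbel2
          rw [← hT] at h
          omega
        obtain ⟨S', g, p', hchain, hgp, hgq, hE⟩ :=
          ih T (swapPos (s+1) f) p q hpq hqn hH1' hH2' hmeas
        refine ⟨S', g, p', Relation.ReflTransGen.head hstep hchain, ?_, ?_, ?_⟩
        · intro x hx
          exact hgp x (swapPos_of_ne hx (by omega) (by omega))
        · intro x hx
          exact hgq x (swapPos_of_ne hx (by omega) (by omega))
        · rw [hE]
          exact Efun_cross hps hsq hab hbel2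
      · -- eject the entry at q-1 to the right past the q-entry
        push_neg at hex
        have hnob : ∀ m, p < m → m < q → ¬ (S m).A ≤ (S p).A :=
          fun m h1 h2 => not_le.mpr (hex m h1 h2)
        obtain ⟨w, rfl⟩ : ∃ w, q = w + 1 := ⟨q - 1, by omega⟩
        have hpw : p < w := by omega
        have h1w := (hH1 w (by omega) (by omega)).2 (hnob w (by omega) (by omega))
        set T := swapAt S w (S (w+1)) ⟨(S w).A, (S w).B, 2 * (S (w+1)).mu - (S w).mu⟩ with hT
        have hTm : ∀ m, m < w → T m = S m := fun m hm =>
          swapAt_other _ _ _ _ (by omega) (by omega)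
        have hTp : T p = S p := hTm p hpw
        have hTw : T w = S (w+1) := swapAt_left _ _ _ _
        have hstep : TReorderStep n (S, f) (T, swapPos w f) := by
          refine ⟨w, by omega, Or.inr (Or.inl ⟨h1w.1, h1w.2, ?_, rfl⟩)⟩
          show T = swapAt S w ⟨(S (w+1)).A, (S (w+1)).B, (S (w+1)).mu⟩
            ⟨(S w).A, (S w).B, 2 * (S (w+1)).mu - (S w).mu⟩
          rfl
        have hH1' : ∀ m, p < m → m < w →
            ((T m).A ≤ (T p).A → (T p).B ≤ (T m).B) ∧
            (¬ (T m).A ≤ (T p).A → (T w).A ≤ (T m).A ∧ (T m).B ≤ (T w).B) := by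
          intro m h1 h2
          rw [hTm m h2, hTp, hTw]
          constructor
          · intro hb
            exact absurd hb (hnob m (by omega) (by omega))
          · intro _
            exact (hH1 m (by omega) (by omega)).2 (hnob m (by omega) (by omega))
        have hH2' : ∀ m m', p < m → m < m' → m' < w →
            ¬ (T m).A ≤ (T p).A → (T m').A ≤ (T p).A → (T m).B ≤ (T m').B := by
          intro m m' h1 h2 h3 hnb hb
          rw [hTm m' (by omega), hTp] at hb
          exact absurd hb (hnob m' (by omega) (by omega))
        have hmeas : meas T p w ≤ M := by
          have h := meas_eject_right hpw hnob
          rw [← hT] at h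
          omega
        obtain ⟨S', g, p', hchain, hgp, hgq, hE⟩ :=
          ih T (swapPos w f) p w hpw (by omega) hH1' hH2' hmeas
        refine ⟨S', g, p', Relation.ReflTransGen.head hstep hchain, ?_, ?_, ?_⟩
        · intro x hx
          exact hgp x (swapPos_of_ne hx (by omega) (by omega))
        · intro x hx
          exact hgq x (swapPos_of_eq_succ hx)
        · rw [hE]
          exact Efun_eject_right hpw hnob

end Stmt15Aux

/-- For a standard homogeneous extended multi-segment all of whose reorderings satisfy
(nec), and connected entries `S_i ∼ S_j`, there is a reordering `𝒮'` in which the entries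
originating from positions `i` and `j` (tracked through the transpositions performed by
the reorders) occupy consecutive positions `p` and `p + 1`, with
`μ'_{p+1} - μ'_p = Δ_𝒮(μ_i, μ_j)`. -/
theorem stmt_15 (n : ℕ) (S : ℕ → ExtSeg)
    (hS : IsEMS n S) (hstd : IsStandard n S)
    (hnec : ∀ S', Reorder n S S' → Nec n S')
    (i j : ℕ) (hconn : Connected n S i j) :
    ∃ (S' : ℕ → ExtSeg) (f : ℕ → ℕ),
      TReorder n (S, id) (S', f) ∧
      f j = f i + 1 ∧
      (S' (f j)).mu - (S' (f i)).mu = Delta S i j := by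
  obtain ⟨hij, hjn, hnot⟩ := hconn
  have hmono : ∀ a b, a < b → b < n → (S a).B ≤ (S b).B := by
    intro a b hab hbn
    by_contra hcon
    push_neg at hcon
    have := hstd b hbn a (by omega) (Or.inl hcon)
    omega
  have hH1 : ∀ m, i < m → m < j →
      ((S m).A ≤ (S i).A → (S i).B ≤ (S m).B) ∧
      (¬ (S m).A ≤ (S i).A → (S j).A ≤ (S m).A ∧ (S m).B ≤ (S j).B) := by
    intro m h1 h2
    constructor
    · intro _
      exact hmono i m h1 (by omega)
    · intro hnb
      constructor
      · by_contra hc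
        push_neg at hc
        exact hnot ⟨m, h1, h2, Or.inr ⟨not_le.mp hnb, hc⟩⟩
      · exact hmono m j h2 hjn
  have hH2 : ∀ m m', i < m → m < m' → m' < j → ¬ (S m).A ≤ (S i).A →
      (S m').A ≤ (S i).A → (S m).B ≤ (S m').B := by
    intro m m' h1 h2 h3 _ _
    exact hmono m m' h2 (by omega)
  obtain ⟨S', g, p', hchain, hgp, hgq, hE⟩ :=
    Stmt15Aux.aux n (Stmt15Aux.meas S i j) S id i j hij hjn hH1 hH2 le_rfl
  refine ⟨S', g, hchain, ?_, ?_⟩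
  · rw [hgq j rfl, hgp i rfl]
  · rw [hgq j rfl, hgp i rfl]
    exact hE
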